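/- Let Γ be a weighted forest and let Γ' be obtained from Γ by blowing up an edge (P,Q): remove the edge (P,Q), add a new vertex R of weight -1 with edges (P,R) and (R,Q), and decrease the weights of P and Q each by 1. Then d(Γ') = d(Γ). -/

import Mathlib

/-! Let `e` be the column of the new vertex `R` in `Q(Γ')`: `-1` at `P` and `Q`, `0` elsewhere.
The block of `Q(Γ')` on the old vertices is `Q(Γ) + e eᵀ`: the diagonal `+1` at `P` and `Q`
undoes the weight drop and the `+1` at `(P,Q)` restores the removed edge. The diagonal entry of
`R` is `1`, so its Schur complement gives `d(Γ') = det (Q(Γ) + e eᵀ - e eᵀ) = d(Γ)`. -/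

open Classical Finset

/-- The matrix `Q(Γ)` of a weighted graph: `-a i` on the diagonal, `-1` for
adjacent vertices, `0` otherwise. -/
noncomputable def wMatrix {V : Type*} [Fintype V] (G : SimpleGraph V) (a : V → ℤ) :
    Matrix V V ℤ :=
  Matrix.of fun i j => if i = j then -a i else if G.Adj i j then (-1 : ℤ) else 0

/-- The determinant `d(Γ)` of a weighted graph. -/
noncomputable def wDet {V : Type*} [Fintype V] (G : SimpleGraph V) (a : V → ℤ) : ℤ :=
  (wMatrix G a).det

/-- The determinant of the weighted graph obtained by deleting a set `s` of
vertices (and all incident edges). -/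
noncomputable def wDetDel {V : Type*} [Fintype V] (G : SimpleGraph V) (a : V → ℤ)
    (s : Set V) : ℤ :=
  wDet (SimpleGraph.comap (Subtype.val : {v // v ∉ s} → V) G) (fun v => a v.1)

/-- The blow-up of a weighted graph at an edge `(P,Q)`: the edge is removed, a
new vertex `R` (of weight `-1`) is joined to both `P` and `Q`, and the weights
of `P` and `Q` each drop by `1`. -/
def blowupEdgeGraph {V : Type*} (G : SimpleGraph V) (P Q : V) :
    SimpleGraph (V ⊕ Unit) where
  Adj x y :=
    match x, y with
    | Sum.inl u, Sum.inl v => G.Adj u v ∧ ¬((u = P ∧ v = Q) ∨ (u = Q ∧ v = P))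
    | Sum.inl u, Sum.inr _ => u = P ∨ u = Q
    | Sum.inr _, Sum.inl v => v = P ∨ v = Q
    | Sum.inr _, Sum.inr _ => False
  symm := by
    constructor
    rintro (u | u) (v | v) h
    · exact ⟨G.symm.symm _ _ h.1, fun hc => h.2
        (hc.elim (fun h' => Or.inr ⟨h'.2, h'.1⟩) (fun h' => Or.inl ⟨h'.2, h'.1⟩))⟩
    · exact h
    · exact h
    · exact h.elim
  loopless := by
    constructor
    rintro (u | u) h
    · exact G.loopless.irrefl u h.1
    · exact h.elim

/-- The weights after blowing up the edge `(P,Q)`. -/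
noncomputable def blowupEdgeWeights {V : Type*} [DecidableEq V] (a : V → ℤ) (P Q : V) :
    V ⊕ Unit → ℤ :=
  Sum.elim (Function.update (Function.update a P (a P - 1)) Q (a Q - 1))
    (fun _ => (-1 : ℤ))

namespace Matrix

theorem det_eq_det_toBlocks_sub_of_toBlocks₂₂_eq_one {m n R : Type*} [Fintype m] [Fintype n]
    [DecidableEq m] [DecidableEq n] [CommRing R] (M : Matrix (m ⊕ n) (m ⊕ n) R)
    (hM : M.toBlocks₂₂ = 1) :
    M.det = (M.toBlocks₁₁ - M.toBlocks₁₂ * M.toBlocks₂₁).det := by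
  rw [← det_fromBlocks_one₂₂, ← hM, fromBlocks_toBlocks]

end Matrix

/-- `wDet` is defined with the classical `DecidableEq` instance. -/
theorem wDet_eq_det {V : Type*} [Fintype V] [DecidableEq V] (G : SimpleGraph V) (a : V → ℤ) :
    wDet G a = (wMatrix G a).det := by
  rw [wDet]
  congr

section BlowupEdge

variable {V : Type*} [DecidableEq V] {P Q : V}

variable (P Q) in
def blowupEdgeVec (i : V) : ℤ := if i = P ∨ i = Q then -1 else 0

theorem blowupEdgeWeights_inl (a : V → ℤ) (hPQ : P ≠ Q) (i : V) :
    blowupEdgeWeights a P Q (Sum.inl i) = a i + blowupEdgeVec P Q i := by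
  by_cases hQ : i = Q
  · simp [blowupEdgeWeights, blowupEdgeVec, hQ, sub_eq_add_neg]
  · by_cases hP : i = P
    · simp [blowupEdgeWeights, blowupEdgeVec, hP, hPQ, sub_eq_add_neg]
    · simp [blowupEdgeWeights, blowupEdgeVec, hP, hQ]

@[simp]
theorem blowupEdgeWeights_inr (a : V → ℤ) (u : Unit) : blowupEdgeWeights a P Q (Sum.inr u) = -1 :=
  rfl

variable [Fintype V] (G : SimpleGraph V) (a : V → ℤ)

theorem toBlocks₁₁_wMatrix_blowupEdge (hPQ : G.Adj P Q) :
    (wMatrix (blowupEdgeGraph G P Q) (blowupEdgeWeights a P Q)).toBlocks₁₁ =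
      wMatrix G a + Matrix.vecMulVec (blowupEdgeVec P Q) (blowupEdgeVec P Q) := by
  ext i j
  simp only [Matrix.toBlocks₁₁, wMatrix, Matrix.of_apply, Matrix.add_apply,
    Matrix.vecMulVec_apply, blowupEdgeWeights_inl a hPQ.ne, Sum.inl.injEq]
  simp only [blowupEdgeGraph, blowupEdgeVec]
  split_ifs <;> grind [SimpleGraph.adj_symm]

theorem toBlocks₁₂_wMatrix_blowupEdge :
    (wMatrix (blowupEdgeGraph G P Q) (blowupEdgeWeights a P Q)).toBlocks₁₂ =
      Matrix.replicateCol Unit (blowupEdgeVec P Q) := by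
  ext
  simp [Matrix.toBlocks₁₂, wMatrix, blowupEdgeVec, blowupEdgeGraph]

theorem toBlocks₂₁_wMatrix_blowupEdge :
    (wMatrix (blowupEdgeGraph G P Q) (blowupEdgeWeights a P Q)).toBlocks₂₁ =
      Matrix.replicateRow Unit (blowupEdgeVec P Q) := by
  ext
  simp [Matrix.toBlocks₂₁, wMatrix, blowupEdgeVec, blowupEdgeGraph]

theorem toBlocks₂₂_wMatrix_blowupEdge :
    (wMatrix (blowupEdgeGraph G P Q) (blowupEdgeWeights a P Q)).toBlocks₂₂ = 1 := by
  ext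
  simp [Matrix.toBlocks₂₂, wMatrix]

end BlowupEdge

theorem forest_det_blowup_edge_general {V : Type*} [Fintype V] [DecidableEq V]
    (G : SimpleGraph V) (a : V → ℤ) (P Q : V)
    (hPQ : G.Adj P Q) :
    wDet (blowupEdgeGraph G P Q) (blowupEdgeWeights a P Q) = wDet G a := by
  rw [wDet_eq_det, Matrix.det_eq_det_toBlocks_sub_of_toBlocks₂₂_eq_one _
      (toBlocks₂₂_wMatrix_blowupEdge G a), toBlocks₁₁_wMatrix_blowupEdge G a hPQ,
    toBlocks₁₂_wMatrix_blowupEdge, toBlocks₂₁_wMatrix_blowupEdge, ← Matrix.vecMulVec_eq,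
    add_sub_cancel_right, wDet_eq_det]

/-- Lemma 5.6, Case 2: the determinant of a weighted forest is preserved by
blowing up an edge. -/
theorem forest_det_blowup_edge {V : Type*} [Fintype V] [DecidableEq V]
    (G : SimpleGraph V) (hG : G.IsAcyclic) (a : V → ℤ) (P Q : V)
    (hPQ : G.Adj P Q) :
    wDet (blowupEdgeGraph G P Q) (blowupEdgeWeights a P Q) = wDet G a :=
  forest_det_blowup_edge_general G a P Q hPQ
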